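/- arXiv:1708.09811 — 2 statements merged into one kernel-verified Lean document; each statement's English description precedes it below -/
import Mathlib

section
/- The Fixed Share algorithm (MarkovHedge with uniform initial distribution θ_1 = (1/M,…,1/M) and transitions θ_t(i|j) = (1−α)·1_{i=j} + α/M for a fixed α ∈ (0,1)) achieves, for every T ≥ 1 and every sequence of experts (i_1,…,i_T) with k shifts (times t ≥ 2 with i_t ≠ i_{t−1}), the regret bound Σ_{t=1}^T ℓ_t − Σ_{t=1}^T ℓ_{i_t,t} ≤ ((k+1)/η) log M + (k/η) log(1/α) + ((T−k−1)/η) log(1/(1−α)). Moreover, with the choice α = k/(T−1) this bound equals ((k+1)/η) log M + ((T−1)/η) H(k/(T−1)), where H(p) = −p log p − (1−p) log(1−p), which is at most ((k+1)/η) log M + (k/η) log((T−1)/k) + k/η. -/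
/-!
With exponential weights, the mix loss `-(1/η) log ∑ᵢ vₜ,ᵢ exp (-η ℓᵢ,ₜ)` of round `t` exceeds the
loss of any expert `i` by exactly `(1/η) log (vᵐₜ,ᵢ / vₜ,ᵢ)`, the log-ratio of its posterior to its
prior weight. Sharing gives `vₜ₊₁,ᵢₜ₊₁ ≥ cₜ₊₁ vᵐₜ,ᵢₜ` with `c = 1 - α` when the comparator stays and
`c = α / M` when it switches, so the sum over rounds telescopes to at most
`(1/η) (log M - ∑ₜ log cₜ)`, the last posterior weight being at most `1`. Exp-concavity bounds the
learner's loss by the mix loss. For `α = k / (T - 1)` the bound is a binary entropy, and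
`-(1 - α) log (1 - α) ≤ α` gives the final estimate.
-/

open Real Finset

namespace FixedShare

variable {ι : Type*} [Fintype ι]

noncomputable def update (η : ℝ) (p L : ι → ℝ) (i : ι) : ℝ :=
  p i * exp (-η * L i) / ∑ j, p j * exp (-η * L j)

noncomputable def share (α : ℝ) (q : ι → ℝ) (i : ι) : ℝ :=
  (1 - α) * q i + α / Fintype.card ι

noncomputable def mixLoss (η : ℝ) (p L : ι → ℝ) : ℝ :=
  -(1 / η) * log (∑ i, p i * exp (-η * L i))

/-- A lower bound for the Fixed Share transition probability `θ(i | j)`: for `i = j` the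
`α / M` term is dropped. -/
noncomputable def switchCoeff [DecidableEq ι] (α : ℝ) (i j : ι) : ℝ :=
  if i ≠ j then α / Fintype.card ι else 1 - α

def shifts [DecidableEq ι] (iseq : ℕ → ι) (T : ℕ) : Finset ℕ :=
  (Icc 2 T).filter (fun t => iseq t ≠ iseq (t - 1))

section Update

variable [Nonempty ι] {η : ℝ} {p : ι → ℝ} (L : ι → ℝ)

lemma sum_mul_exp_pos (hp : ∀ i, 0 < p i) : 0 < ∑ i, p i * exp (-η * L i) :=
  sum_pos (fun i _ => mul_pos (hp i) (exp_pos _)) univ_nonempty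

lemma update_pos (hp : ∀ i, 0 < p i) (i : ι) : 0 < update η p L i :=
  div_pos (mul_pos (hp i) (exp_pos _)) (sum_mul_exp_pos L hp)

lemma sum_update (hp : ∀ i, 0 < p i) : ∑ i, update η p L i = 1 := by
  simp only [update, ← sum_div]
  exact div_self (sum_mul_exp_pos L hp).ne'

lemma update_le_one (hp : ∀ i, 0 < p i) (i : ι) : update η p L i ≤ 1 :=
  sum_update L hp ▸ single_le_sum (fun j _ => (update_pos L hp j).le) (mem_univ i)

lemma log_update (hη : η ≠ 0) (hp : ∀ i, 0 < p i) (i : ι) :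
    log (update η p L i) = log (p i) - η * L i + η * mixLoss η p L := by
  rw [update, mixLoss, log_div (mul_pos (hp i) (exp_pos _)).ne' (sum_mul_exp_pos L hp).ne',
    log_mul (hp i).ne' (exp_pos _).ne', log_exp]
  field_simp
  ring

end Update

section Share

variable {α : ℝ} {q : ι → ℝ}

lemma share_pos [Nonempty ι] (hα : 0 < α) (hα1 : α ≤ 1) (hq : ∀ i, 0 ≤ q i) (i : ι) :
    0 < share α q i := by
  have hqi := hq i
  have hα' : 0 ≤ 1 - α := by linarith
  unfold share
  positivity

lemma sum_share [Nonempty ι] (hq : ∑ i, q i = 1) : ∑ i, share α q i = 1 := by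
  have hcard : (Fintype.card ι : ℝ) ≠ 0 := Nat.cast_ne_zero.2 Fintype.card_ne_zero
  simp only [share, sum_add_distrib, ← mul_sum, hq, sum_const, card_univ, nsmul_eq_mul]
  field_simp
  ring

variable [DecidableEq ι]

lemma switchCoeff_pos [Nonempty ι] (hα : 0 < α) (hα1 : α < 1) (i j : ι) :
    0 < switchCoeff α i j := by
  unfold switchCoeff
  split_ifs
  · positivity
  · linarith

lemma switchCoeff_mul_le_share (hα : 0 ≤ α) (hα1 : α ≤ 1) (hq : ∀ i, 0 ≤ q i)
    (hq1 : ∑ i, q i = 1) (i j : ι) : switchCoeff α i j * q j ≤ share α q i := by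
  have hshare : 0 ≤ α / Fintype.card ι := by positivity
  have hqi := hq i
  unfold switchCoeff share
  split_ifs with hij
  · have hqj : q j ≤ 1 := hq1 ▸ single_le_sum (fun k _ => hq k) (mem_univ j)
    have hstay : 0 ≤ (1 - α) * q i := mul_nonneg (by linarith) hqi
    nlinarith
  · rw [not_not.1 hij]
    linarith

end Share

lemma sum_log_switchCoeff [DecidableEq ι] (α : ℝ) (iseq : ℕ → ι) {T : ℕ} (hT : 1 ≤ T) :
    ∑ t ∈ Icc 2 T, log (switchCoeff α (iseq t) (iseq (t - 1)))
      = #(shifts iseq T) * log (α / Fintype.card ι)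
        + ((T : ℝ) - 1 - #(shifts iseq T)) * log (1 - α) := by
  have hcard : #(shifts iseq T) + #((Icc 2 T).filter (fun t => ¬iseq t ≠ iseq (t - 1))) + 1 = T := by
    have := card_filter_add_card_filter_not (s := Icc 2 T) (p := fun t => iseq t ≠ iseq (t - 1))
    rw [Nat.card_Icc] at this
    rw [shifts]
    omega
  have hcard' : (#((Icc 2 T).filter (fun t => ¬iseq t ≠ iseq (t - 1))) : ℝ)
      = T - 1 - #(shifts iseq T) := by
    have : (T : ℝ) = _ := congrArg Nat.cast hcard.symm
    push_cast at this
    linarith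
  simp only [switchCoeff, apply_ite log, sum_ite, sum_const, nsmul_eq_mul, hcard']
  rfl

structure IsFixedShareWeights (η α : ℝ) (L v : ℕ → ι → ℝ) : Prop where
  init : ∀ i, v 1 i = 1 / Fintype.card ι
  step : ∀ t, 1 ≤ t → v (t + 1) = share α (update η (v t) (L t))

namespace IsFixedShareWeights

variable [Nonempty ι] {η α : ℝ} {L v : ℕ → ι → ℝ}

lemma pos_and_sum_eq_one (hv : IsFixedShareWeights η α L v) (hα : 0 < α) (hα1 : α ≤ 1)
    {t : ℕ} (ht : 1 ≤ t) : (∀ i, 0 < v t i) ∧ ∑ i, v t i = 1 := by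
  induction t, ht using Nat.le_induction with
  | base =>
    have hcard : (Fintype.card ι : ℝ) ≠ 0 := Nat.cast_ne_zero.2 Fintype.card_ne_zero
    simp only [hv.init, sum_const, card_univ, nsmul_eq_mul]
    exact ⟨fun _ => by positivity, by field_simp⟩
  | succ t ht ih =>
    rw [hv.step t ht]
    exact ⟨share_pos hα hα1 fun i => (update_pos (L t) ih.1 i).le, sum_share (sum_update _ ih.1)⟩

variable [DecidableEq ι]

lemma log_switchCoeff_add_log_update_le (hv : IsFixedShareWeights η α L v) (hα : 0 < α)
    (hα1 : α < 1) (iseq : ℕ → ι) {t : ℕ} (ht : 1 ≤ t) :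
    log (switchCoeff α (iseq (t + 1)) (iseq t)) + log (update η (v t) (L t) (iseq t))
      ≤ log (v (t + 1) (iseq (t + 1))) := by
  have hvt := (hv.pos_and_sum_eq_one hα hα1.le ht).1
  rw [← log_mul (switchCoeff_pos hα hα1 _ _).ne' (update_pos _ hvt _).ne', hv.step t ht]
  exact log_le_log (mul_pos (switchCoeff_pos hα hα1 _ _) (update_pos _ hvt _))
    (switchCoeff_mul_le_share hα.le hα1.le (fun i => (update_pos _ hvt i).le)
      (sum_update _ hvt) _ _)

lemma mul_sum_mixLoss_sub_le (hv : IsFixedShareWeights η α L v) (hη : η ≠ 0) (hα : 0 < α)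
    (hα1 : α < 1) (iseq : ℕ → ι) {T : ℕ} (hT : 1 ≤ T) :
    η * ∑ t ∈ Icc 1 T, (mixLoss η (v t) (L t) - L t (iseq t))
      ≤ log (Fintype.card ι) - ∑ t ∈ Icc 2 T, log (switchCoeff α (iseq t) (iseq (t - 1)))
        + log (update η (v T) (L T) (iseq T)) := by
  have hstep : ∀ t, 1 ≤ t → η * (mixLoss η (v t) (L t) - L t (iseq t))
      = log (update η (v t) (L t) (iseq t)) - log (v t (iseq t)) := fun t ht => by
    rw [log_update _ hη (hv.pos_and_sum_eq_one hα hα1.le ht).1]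
    ring
  induction T, hT using Nat.le_induction with
  | base =>
    rw [Icc_self, Icc_eq_empty (by omega), sum_singleton, sum_empty, hstep 1 le_rfl, hv.init,
      one_div, log_inv]
    linarith
  | succ T hT ih =>
    rw [sum_Icc_succ_top (by omega), sum_Icc_succ_top (by omega), mul_add, hstep (T + 1) (by omega)]
    have hshare := hv.log_switchCoeff_add_log_update_le hα hα1 iseq hT
    rw [Nat.add_sub_cancel]
    linarith

lemma sum_mixLoss_sub_sum_le (hv : IsFixedShareWeights η α L v) (hη : 0 < η) (hα : 0 < α)
    (hα1 : α < 1) (iseq : ℕ → ι) {T : ℕ} (hT : 1 ≤ T) :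
    ∑ t ∈ Icc 1 T, mixLoss η (v t) (L t) - ∑ t ∈ Icc 1 T, L t (iseq t)
      ≤ ((#(shifts iseq T) + 1) / η) * log (Fintype.card ι)
        + (#(shifts iseq T) / η) * log (1 / α)
        + ((T - #(shifts iseq T) - 1) / η) * log (1 / (1 - α)) := by
  have hcard : (Fintype.card ι : ℝ) ≠ 0 := Nat.cast_ne_zero.2 Fintype.card_ne_zero
  have hbound := hv.mul_sum_mixLoss_sub_le hη.ne' hα hα1 iseq hT
  have hlog_le : log (update η (v T) (L T) (iseq T)) ≤ 0 :=
    log_nonpos (update_pos _ (hv.pos_and_sum_eq_one hα hα1.le hT).1 _).le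
      (update_le_one _ (hv.pos_and_sum_eq_one hα hα1.le hT).1 _)
  rw [sum_log_switchCoeff α iseq hT, log_div hα.ne' hcard] at hbound
  rw [← sum_sub_distrib, ← mul_le_mul_iff_of_pos_left hη, one_div, one_div, log_inv, log_inv]
  have hscale : η * (((#(shifts iseq T) + 1) / η) * log (Fintype.card ι)
        + (#(shifts iseq T) / η) * -log α + ((T - #(shifts iseq T) - 1) / η) * -log (1 - α)) =
      (#(shifts iseq T) + 1) * log (Fintype.card ι) - #(shifts iseq T) * log α
        - (T - #(shifts iseq T) - 1) * log (1 - α) := by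
    field_simp
    ring
  rw [hscale]
  linarith

end IsFixedShareWeights

end FixedShare

lemma Real.mul_binEntropy_div_le {k n : ℝ} (hk : 0 ≤ k) (hkn : k ≤ n) :
    n * binEntropy (k / n) ≤ k * log (n / k) + k := by
  obtain rfl | hn := (hk.trans hkn).eq_or_lt
  · obtain rfl : k = 0 := le_antisymm hkn hk
    simp
  have hentropy : n * negMulLog (k / n) = k * log (n / k) := by
    rw [negMulLog, ← inv_div, log_inv]
    field_simp
  have hcross : n * negMulLog (1 - k / n) ≤ k := by
    have := negMulLog_le_one_sub_self (x := 1 - k / n) (by rw [sub_nonneg, div_le_one hn]; exact hkn)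
    calc _ ≤ n * (1 - (1 - k / n)) := by gcongr
      _ = k := by field_simp; ring
  rw [binEntropy_eq_negMulLog_add_negMulLog_one_sub, mul_add]
  linarith

open FixedShare in
/-- **Fixed Share regret bound (Corollary 1).**
Fixed Share (MarkovHedge with uniform initial distribution and transitions
θ_t(i|j) = (1−α)·1_{i=j} + α/M) achieves, for every T ≥ 1 and every sequence of experts
with k shifts, Σ ℓ_t − Σ ℓ_{i_t,t} ≤ ((k+1)/η) log M + (k/η) log(1/α)
+ ((T−k−1)/η) log(1/(1−α)); moreover, for α = k/(T−1) this bound equals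
((k+1)/η) log M + ((T−1)/η) H(k/(T−1)), which is at most
((k+1)/η) log M + (k/η) log((T−1)/k) + k/η. -/
theorem fixedShare_regret
    {E : Type*} [AddCommGroup E] [Module ℝ E] {Y : Type*}
    (X : Set E) (ℓ : E → Y → ℝ) (η : ℝ) (hη : 0 < η)
    (hexp : ∀ (yy : Y) (N : ℕ), 1 ≤ N → ∀ xs : Fin N → E, (∀ i, xs i ∈ X) →
      ∀ vv : Fin N → ℝ, (∀ i, 0 ≤ vv i) → (∑ i, vv i) = 1 →
      ℓ (∑ i, vv i • xs i) yy ≤ -(1/η) * Real.log (∑ i, vv i * Real.exp (-η * ℓ (xs i) yy)))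
    (M : ℕ) (hM : 1 ≤ M)
    (α : ℝ) (hα : 0 < α ∧ α < 1)
    (xe : Fin M → ℕ → E) (hxe : ∀ i t, xe i t ∈ X) (y : ℕ → Y)
    -- Fixed Share weights: uniform initialization, posterior, then sharing
    (v : ℕ → Fin M → ℝ)
    (hv1 : ∀ i, v 1 i = 1 / (M : ℝ))
    (hvupd : ∀ t, 1 ≤ t → ∀ i, v (t+1) i =
      (1 - α) *
        (v t i * Real.exp (-η * ℓ (xe i t) (y t)) /
          ∑ j, v t j * Real.exp (-η * ℓ (xe j t) (y t)))
      + α / (M : ℝ))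
    (xl : ℕ → E)
    (hxl : ∀ t, 1 ≤ t → xl t = ∑ i, v t i • xe i t) :
    ∀ T : ℕ, 1 ≤ T → ∀ iseq : ℕ → Fin M,
      ∀ k : ℕ, k = ((Finset.Icc 2 T).filter (fun t => iseq t ≠ iseq (t-1))).card →
      ((∑ t ∈ Finset.Icc 1 T, ℓ (xl t) (y t))
          - (∑ t ∈ Finset.Icc 1 T, ℓ (xe (iseq t) t) (y t))
        ≤ (((k : ℝ) + 1) / η) * Real.log (M : ℝ)
          + ((k : ℝ) / η) * Real.log (1 / α)
          + (((T : ℝ) - (k : ℝ) - 1) / η) * Real.log (1 / (1 - α)))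
      ∧ (α = (k : ℝ) / ((T : ℝ) - 1) →
          ((((k : ℝ) + 1) / η) * Real.log (M : ℝ)
              + ((k : ℝ) / η) * Real.log (1 / α)
              + (((T : ℝ) - (k : ℝ) - 1) / η) * Real.log (1 / (1 - α))
            = (((k : ℝ) + 1) / η) * Real.log (M : ℝ)
              + (((T : ℝ) - 1) / η) *
                (-(((k : ℝ) / ((T : ℝ) - 1)) * Real.log ((k : ℝ) / ((T : ℝ) - 1)))
                  - (1 - (k : ℝ) / ((T : ℝ) - 1)) * Real.log (1 - (k : ℝ) / ((T : ℝ) - 1))))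
          ∧ ((((k : ℝ) + 1) / η) * Real.log (M : ℝ)
              + (((T : ℝ) - 1) / η) *
                (-(((k : ℝ) / ((T : ℝ) - 1)) * Real.log ((k : ℝ) / ((T : ℝ) - 1)))
                  - (1 - (k : ℝ) / ((T : ℝ) - 1)) * Real.log (1 - (k : ℝ) / ((T : ℝ) - 1)))
            ≤ (((k : ℝ) + 1) / η) * Real.log (M : ℝ)
              + ((k : ℝ) / η) * Real.log (((T : ℝ) - 1) / (k : ℝ))
              + (k : ℝ) / η)) := by
  intro T hT iseq k hk
  have : Nonempty (Fin M) := ⟨⟨0, hM⟩⟩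
  set L : ℕ → Fin M → ℝ := fun t i => ℓ (xe i t) (y t)
  have hv : IsFixedShareWeights η α L v :=
    ⟨by simpa using hv1, fun t ht => funext fun i => by
      simp only [hvupd t ht i, share, update, Fintype.card_fin, L]⟩
  have hlearner : ∀ t ∈ Icc 1 T, ℓ (xl t) (y t) ≤ mixLoss η (v t) (L t) := fun t ht => by
    obtain ⟨hpos, hsum⟩ := hv.pos_and_sum_eq_one hα.1 hα.2.le (mem_Icc.1 ht).1
    rw [hxl t (mem_Icc.1 ht).1]
    exact hexp (y t) M hM _ (fun i => hxe i t) (v t) (fun i => (hpos i).le) hsum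
  have hregret := hv.sum_mixLoss_sub_sum_le hη hα.1 hα.2 iseq hT
  rw [Fintype.card_fin, show #(shifts iseq T) = k from hk.symm] at hregret
  refine ⟨(sub_le_sub_right (sum_le_sum hlearner) _).trans hregret, fun hαk => ?_⟩
  have hkT : (k : ℝ) ≤ T - 1 := by
    have := hk ▸ card_filter_le (Icc 2 T) (fun t => iseq t ≠ iseq (t - 1))
    rw [Nat.card_Icc] at this
    rw [le_sub_iff_add_le]
    exact_mod_cast (by omega : k + 1 ≤ T)
  have hn : (T : ℝ) - 1 ≠ 0 := by
    rintro h
    rw [h, div_zero] at hαk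
    linarith [hα.1]
  have hH (p : ℝ) : -(p * log p) - (1 - p) * log (1 - p) = binEntropy p := by
    simp only [binEntropy, log_inv]
    ring
  simp only [hH]
  constructor
  · rw [← hαk, binEntropy, show (k : ℝ) = α * (T - 1) by rw [hαk]; field_simp, one_div, one_div]
    ring
  · calc _ = (k + 1) / η * log M + ((T - 1) * binEntropy (k / (T - 1))) / η := by ring
      _ ≤ (k + 1) / η * log M + (k * log ((T - 1) / k) + k) / η := by
        gcongr
        exact mul_binEntropy_div_le k.cast_nonneg hkT
      _ = _ := by ring
end

section
/- The Decreasing Share algorithm (MarkovHedge with uniform initial distribution and transitions θ_t(i|j) = (1−α_t)·1_{i=j} + α_t/M) achieves, for every T ≥ 1 and every sequence of experts (i_1,…,i_T) with k shifts at times σ_1 < … < σ_k, the regret bound Σ_{t=1}^T ℓ_t − Σ_{t=1}^T ℓ_{i_t,t} ≤ ((k+1)/η) log M + (1/η) Σ_{j=1}^k log(1/α_{σ_j}) + (1/η) Σ_{t=2}^T log(1/(1−α_t)). In particular, with α_t = 1/t this bound becomes ((k+1)/η) log M + (1/η) Σ_{j=1}^k log σ_j + (1/η) log T, which is at most ((k+1)/η)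 log M + ((k+1)/η) log T. -/
/-!
Exp-concavity bounds the learner's loss in round `t` by `-(1/η) log Z_t`, where `Z_t` normalises
the Bayesian posterior `w_t` of the weights `v_t`; hence
`ℓ_t - ℓ_{i,t} ≤ (1/η) (log w_t(i) - log v_t(i))`. Along the comparison path this sum telescopes
into `log w_T(i_T) ≤ 0`, `-log v_1(i_1) = log M` and the drops
`log w_{t-1}(i_{t-1}) - log v_t(i_t)`. Since `v_t ≥ (1 - α_t) w_{t-1}` and `v_t ≥ α_t / M`
coordinatewise, a drop costs at most `log (1 / (1 - α_t))` when the path stays and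
`log M + log (1 / α_t)` when it shifts.
-/

open Real Finset

namespace MarkovHedge

variable {ι : Type*} [Fintype ι]

noncomputable def posterior (v g : ι → ℝ) (i : ι) : ℝ := v i * g i / ∑ j, v j * g j

/-- The transition `θ(i|j) = (1 - α) 1_{i=j} + α / n` applied to the weights `w`. -/
noncomputable def share (α : ℝ) (w : ι → ℝ) (i : ι) : ℝ := (1 - α) * w i + α / Fintype.card ι

section Posterior

variable [Nonempty ι] {v g : ι → ℝ}

lemma sum_mul_pos (hv : ∀ i, 0 < v i) (hg : ∀ i, 0 < g i) : 0 < ∑ j, v j * g j :=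
  sum_pos (fun j _ => mul_pos (hv j) (hg j)) univ_nonempty

lemma posterior_pos (hv : ∀ i, 0 < v i) (hg : ∀ i, 0 < g i) (i : ι) : 0 < posterior v g i :=
  div_pos (mul_pos (hv i) (hg i)) (sum_mul_pos hv hg)

lemma sum_posterior (hv : ∀ i, 0 < v i) (hg : ∀ i, 0 < g i) : ∑ i, posterior v g i = 1 := by
  simp only [posterior, ← sum_div]
  exact div_self (sum_mul_pos hv hg).ne'

lemma posterior_le_one (hv : ∀ i, 0 < v i) (hg : ∀ i, 0 < g i) (i : ι) : posterior v g i ≤ 1 :=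
  sum_posterior hv hg ▸
    single_le_sum (fun j _ => (posterior_pos hv hg j).le) (mem_univ i)

lemma log_posterior (hv : ∀ i, 0 < v i) (hg : ∀ i, 0 < g i) (i : ι) :
    log (posterior v g i) = log (v i) + log (g i) - log (∑ j, v j * g j) := by
  rw [posterior, log_div (mul_pos (hv i) (hg i)).ne' (sum_mul_pos hv hg).ne',
    log_mul (hv i).ne' (hg i).ne']

lemma sub_le_log_posterior_sub_log {η : ℝ} (hη : 0 < η) (hv : ∀ i, 0 < v i) {L : ι → ℝ} {m : ℝ}
    (hm : m ≤ -(1 / η) * log (∑ j, v j * exp (-η * L j))) (i : ι) :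
    m - L i ≤ (1 / η) * (log (posterior v (fun j => exp (-η * L j)) i) - log (v i)) := by
  rw [log_posterior hv (fun _ => exp_pos _), log_exp]
  have : (1 / η) * (-η * L i) = -L i := by field_simp
  linarith [mul_sub (1 / η) (-η * L i) (log (∑ j, v j * exp (-η * L j)))]

end Posterior

section Share

variable [Nonempty ι] {α : ℝ} {w : ι → ℝ}

lemma share_pos (hw : ∀ i, 0 ≤ w i) (hα : 0 < α) (hα1 : α ≤ 1) (i : ι) : 0 < share α w i :=
  add_pos_of_nonneg_of_pos (mul_nonneg (by linarith) (hw i)) (by positivity)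

lemma sum_share (hw : ∑ i, w i = 1) : ∑ i, share α w i = 1 := by
  simp only [share, sum_add_distrib, ← mul_sum, hw, sum_const, card_univ, nsmul_eq_mul]
  field_simp
  ring

lemma log_sub_log_share_le [DecidableEq ι] (hw : ∀ i, 0 < w i) (hw1 : ∀ i, w i ≤ 1)
    (hα : 0 < α) (hα1 : α < 1) (i j : ι) :
    log (w j) - log (share α w i) ≤
      log (1 / (1 - α)) + if i ≠ j then log (Fintype.card ι) + log (1 / α) else 0 := by
  have h1α : 0 < 1 - α := by linarith
  have hn : (0 : ℝ) < Fintype.card ι := by exact_mod_cast Fintype.card_pos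
  have hstay : (1 - α) * w i ≤ share α w i := le_add_of_nonneg_right (by positivity)
  have hswitch : α / Fintype.card ι ≤ share α w i :=
    le_add_of_nonneg_left (mul_nonneg h1α.le (hw i).le)
  rw [one_div, log_inv, one_div, log_inv]
  split_ifs with hij
  · have := log_le_log (by positivity) hswitch
    rw [log_div hα.ne' hn.ne'] at this
    linarith [log_nonpos (hw j).le (hw1 j), log_nonpos h1α.le (by linarith : 1 - α ≤ 1)]
  · obtain rfl := not_not.mp hij
    have := log_le_log (mul_pos h1α (hw i)) hstay
    rw [log_mul h1α.ne' (hw i).ne'] at this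
    linarith

end Share

lemma sum_Icc_sub_telescope (a b : ℕ → ℝ) {T : ℕ} (hT : 1 ≤ T) :
    ∑ t ∈ Icc 1 T, (a t - b t) = a T - b 1 + ∑ t ∈ Icc 2 T, (a (t - 1) - b t) := by
  induction T, hT using Nat.le_induction with
  | base => simp
  | succ T hT ih =>
    rw [sum_Icc_succ_top (by omega), sum_Icc_succ_top (by omega), ih, Nat.add_sub_cancel]
    ring

structure IsShareWeights (α : ℕ → ℝ) (g : ℕ → ι → ℝ) (v : ℕ → ι → ℝ) : Prop where
  init : ∀ i, v 1 i = 1 / Fintype.card ι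
  succ : ∀ t, 1 ≤ t → v (t + 1) = share (α (t + 1)) (posterior (v t) (g t))

namespace IsShareWeights

variable [Nonempty ι] {α : ℕ → ℝ} {g v : ℕ → ι → ℝ}

lemma pos_and_sum_eq_one (hv : IsShareWeights α g v) (hα : ∀ t, 2 ≤ t → 0 < α t ∧ α t < 1)
    (hg : ∀ t i, 0 < g t i) {t : ℕ} (ht : 1 ≤ t) : (∀ i, 0 < v t i) ∧ ∑ i, v t i = 1 := by
  induction t, ht using Nat.le_induction with
  | base =>
    simp only [hv.init, one_div, sum_const, card_univ, nsmul_eq_mul]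
    have : (0 : ℝ) < Fintype.card ι := by exact_mod_cast Fintype.card_pos
    exact ⟨fun _ => by positivity, by field_simp⟩
  | succ t ht ih =>
    have hαt := hα (t + 1) (by omega)
    rw [hv.succ t ht]
    exact ⟨share_pos (fun i => (posterior_pos ih.1 (hg t) i).le) hαt.1 hαt.2.le,
      sum_share (sum_posterior ih.1 (hg t))⟩

theorem sum_log_posterior_sub_log_le [DecidableEq ι] (hv : IsShareWeights α g v)
    (hα : ∀ t, 2 ≤ t → 0 < α t ∧ α t < 1) (hg : ∀ t i, 0 < g t i) (path : ℕ → ι)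
    {T : ℕ} (hT : 1 ≤ T) :
    ∑ t ∈ Icc 1 T, (log (posterior (v t) (g t) (path t)) - log (v t (path t))) ≤
      log (Fintype.card ι) + ∑ t ∈ Icc 2 T, (log (1 / (1 - α t)) +
        if path t ≠ path (t - 1) then log (Fintype.card ι) + log (1 / α t) else 0) := by
  have hpos : ∀ t, 1 ≤ t → ∀ i, 0 < v t i := fun t ht => (hv.pos_and_sum_eq_one hα hg ht).1
  rw [sum_Icc_sub_telescope _ _ hT]
  have hlast : log (posterior (v T) (g T) (path T)) ≤ 0 :=
    log_nonpos (posterior_pos (hpos T hT) (hg T) _).le (posterior_le_one (hpos T hT) (hg T) _)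
  have hfirst : log (v 1 (path 1)) = -log (Fintype.card ι) := by
    rw [hv.init, one_div, log_inv]
  have hround : ∀ t ∈ Icc 2 T,
      log (posterior (v (t - 1)) (g (t - 1)) (path (t - 1))) - log (v t (path t)) ≤
        log (1 / (1 - α t)) +
          if path t ≠ path (t - 1) then log (Fintype.card ι) + log (1 / α t) else 0 := by
    intro t ht
    obtain ⟨ht2, -⟩ := mem_Icc.mp ht
    have hprev := hpos (t - 1) (by omega)
    have hvt := hv.succ (t - 1) (by omega)
    rw [Nat.sub_add_cancel (by omega : 1 ≤ t)] at hvt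
    rw [hvt]
    exact log_sub_log_share_le (posterior_pos hprev (hg _)) (posterior_le_one hprev (hg _))
      (hα t ht2).1 (hα t ht2).2 _ _
  linarith [sum_le_sum hround]

theorem regret_le [DecidableEq ι] {η : ℝ} (hη : 0 < η) {L : ℕ → ι → ℝ}
    (hv : IsShareWeights α (fun t i => exp (-η * L t i)) v) (hα : ∀ t, 2 ≤ t → 0 < α t ∧ α t < 1)
    {m : ℕ → ℝ} (hm : ∀ t, 1 ≤ t → (∀ i, 0 < v t i) → ∑ i, v t i = 1 →
      m t ≤ -(1 / η) * log (∑ i, v t i * exp (-η * L t i)))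
    (path : ℕ → ι) {T : ℕ} (hT : 1 ≤ T) :
    ∑ t ∈ Icc 1 T, m t - ∑ t ∈ Icc 1 T, L t (path t) ≤
      (1 / η) * (log (Fintype.card ι) + ∑ t ∈ Icc 2 T, (log (1 / (1 - α t)) +
        if path t ≠ path (t - 1) then log (Fintype.card ι) + log (1 / α t) else 0)) := by
  have hg : ∀ t i, 0 < exp (-η * L t i) := fun _ _ => exp_pos _
  have hround : ∀ t ∈ Icc 1 T, m t - L t (path t) ≤ (1 / η) *
      (log (posterior (v t) (fun i => exp (-η * L t i)) (path t)) - log (v t (path t))) := by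
    intro t ht
    obtain ⟨hpos, hsum⟩ := hv.pos_and_sum_eq_one hα hg (mem_Icc.mp ht).1
    exact sub_le_log_posterior_sub_log hη hpos (hm t (mem_Icc.mp ht).1 hpos hsum) _
  rw [← sum_sub_distrib]
  refine (sum_le_sum hround).trans ?_
  rw [← mul_sum]
  exact mul_le_mul_of_nonneg_left (hv.sum_log_posterior_sub_log_le hα hg path hT) (by positivity)

end IsShareWeights

lemma sum_ite_eq_sum_comp {β γ M : Type*} [DecidableEq β] [AddCommMonoid M] {s : Finset β}
    {A : Finset γ} {p : β → Prop} [DecidablePred p] {σ : γ → β} (f : β → M)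
    (hσ : Set.InjOn σ A) (hmaps : ∀ j ∈ A, σ j ∈ s) (hp : ∀ t ∈ s, p t ↔ ∃ j ∈ A, σ j = t) :
    ∑ t ∈ s, (if p t then f t else 0) = ∑ j ∈ A, f (σ j) := by
  have : s.filter p = A.image σ := by
    ext t
    simp only [mem_filter, mem_image]
    constructor
    · rintro ⟨hts, hpt⟩
      exact (hp t hts).mp hpt
    · rintro ⟨j, hj, rfl⟩
      exact ⟨hmaps j hj, (hp _ (hmaps j hj)).mpr ⟨j, hj, rfl⟩⟩
  rw [← sum_filter, this, sum_image hσ]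

/-- With `α t = 1 / t` the factors `1 / (1 - α t) = t / (t - 1)` telescope. -/
lemma sum_Icc_log_one_div_one_sub_inv {T : ℕ} (hT : 1 ≤ T) :
    ∑ t ∈ Icc 2 T, log (1 / (1 - 1 / (t : ℝ))) = log T := by
  induction T, hT using Nat.le_induction with
  | base => simp
  | succ T hT ih =>
    have hT0 : (T : ℝ) ≠ 0 := by positivity
    have : (1 : ℝ) - 1 / ((T + 1 : ℕ) : ℝ) = T / (T + 1) := by push_cast; field_simp; ring
    rw [sum_Icc_succ_top (by omega), ih, this, one_div_div, log_div (by positivity) hT0]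
    push_cast
    ring

lemma sum_log_le_card_mul_log {γ : Type*} {s : Finset γ} {σ : γ → ℕ} {T : ℕ}
    (hσ : ∀ j ∈ s, 0 < σ j ∧ σ j ≤ T) : ∑ j ∈ s, log (σ j : ℝ) ≤ #s * log T := by
  rw [← nsmul_eq_mul, ← sum_const]
  exact sum_le_sum fun j hj =>
    log_le_log (by exact_mod_cast (hσ j hj).1) (by exact_mod_cast (hσ j hj).2)

end MarkovHedge

open MarkovHedge in
/-- **Decreasing Share regret bound (Corollary 2).**
Decreasing Share (MarkovHedge with uniform initial distribution and transitions
θ_t(i|j) = (1−α_t)·1_{i=j} + α_t/M) achieves, for every T ≥ 1 and every sequence of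
experts with k shifts at times σ_1 < … < σ_k,
Σ ℓ_t − Σ ℓ_{i_t,t} ≤ ((k+1)/η) log M + (1/η) Σ_j log(1/α_{σ_j})
+ (1/η) Σ_{t=2}^T log(1/(1−α_t)); in particular, with α_t = 1/t the bound becomes
((k+1)/η) log M + (1/η) Σ_j log σ_j + (1/η) log T
≤ ((k+1)/η) log M + ((k+1)/η) log T. -/
theorem decreasingShare_regret
    {E : Type*} [AddCommGroup E] [Module ℝ E] {Y : Type*}
    (X : Set E) (ℓ : E → Y → ℝ) (η : ℝ) (hη : 0 < η)
    (hexp : ∀ (yy : Y) (N : ℕ), 1 ≤ N → ∀ xs : Fin N → E, (∀ i, xs i ∈ X) →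
      ∀ vv : Fin N → ℝ, (∀ i, 0 ≤ vv i) → (∑ i, vv i) = 1 →
      ℓ (∑ i, vv i • xs i) yy ≤ -(1/η) * Real.log (∑ i, vv i * Real.exp (-η * ℓ (xs i) yy)))
    (M : ℕ) (hM : 1 ≤ M)
    (α : ℕ → ℝ) (hα : ∀ t, 2 ≤ t → 0 < α t ∧ α t < 1)
    (xe : Fin M → ℕ → E) (hxe : ∀ i t, xe i t ∈ X) (y : ℕ → Y)
    -- Decreasing Share weights: uniform initialization, posterior, then sharing
    (v : ℕ → Fin M → ℝ)
    (hv1 : ∀ i, v 1 i = 1 / (M : ℝ))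
    (hvupd : ∀ t, 1 ≤ t → ∀ i, v (t+1) i =
      (1 - α (t+1)) *
        (v t i * Real.exp (-η * ℓ (xe i t) (y t)) /
          ∑ j, v t j * Real.exp (-η * ℓ (xe j t) (y t)))
      + α (t+1) / (M : ℝ))
    (xl : ℕ → E)
    (hxl : ∀ t, 1 ≤ t → xl t = ∑ i, v t i • xe i t)
    -- horizon and comparison sequence, with shifts exactly at times σ_1 < … < σ_k
    (T : ℕ) (hT : 1 ≤ T) (iseq : ℕ → Fin M)
    (k : ℕ) (σ : ℕ → ℕ)
    (hσmono : ∀ j, 1 ≤ j → j < k → σ j < σ (j+1))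
    (hσrange : ∀ j, 1 ≤ j → j ≤ k → 2 ≤ σ j ∧ σ j ≤ T)
    (hshift : ∀ t, 2 ≤ t → t ≤ T →
      (iseq t ≠ iseq (t-1) ↔ ∃ j ∈ Finset.Icc 1 k, σ j = t)) :
    ((∑ t ∈ Finset.Icc 1 T, ℓ (xl t) (y t))
        - (∑ t ∈ Finset.Icc 1 T, ℓ (xe (iseq t) t) (y t))
      ≤ (((k : ℝ) + 1) / η) * Real.log (M : ℝ)
        + (1/η) * ∑ j ∈ Finset.Icc 1 k, Real.log (1 / α (σ j))
        + (1/η) * ∑ t ∈ Finset.Icc 2 T, Real.log (1 / (1 - α t)))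
    ∧ ((∀ t, 2 ≤ t → α t = 1 / (t : ℝ)) →
        ((∑ t ∈ Finset.Icc 1 T, ℓ (xl t) (y t))
            - (∑ t ∈ Finset.Icc 1 T, ℓ (xe (iseq t) t) (y t))
          ≤ (((k : ℝ) + 1) / η) * Real.log (M : ℝ)
            + (1/η) * ∑ j ∈ Finset.Icc 1 k, Real.log (σ j : ℝ)
            + (1/η) * Real.log (T : ℝ))
        ∧ ((((k : ℝ) + 1) / η) * Real.log (M : ℝ)
            + (1/η) * ∑ j ∈ Finset.Icc 1 k, Real.log (σ j : ℝ)
            + (1/η) * Real.log (T : ℝ)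
          ≤ (((k : ℝ) + 1) / η) * Real.log (M : ℝ)
            + (((k : ℝ) + 1) / η) * Real.log (T : ℝ))) := by
  have : Nonempty (Fin M) := Fin.pos_iff_nonempty.mp hM
  have hv : IsShareWeights α (fun t i => exp (-η * ℓ (xe i t) (y t))) v :=
    ⟨by simpa using hv1, fun t ht => funext fun i => by simp [hvupd t ht, share, posterior]⟩
  have hσIcc : ∀ j ∈ Icc 1 k, σ j ∈ Icc 2 T :=
    fun j hj => mem_Icc.mpr (hσrange j (mem_Icc.mp hj).1 (mem_Icc.mp hj).2)
  have hσ : StrictMonoOn σ (Set.Icc 1 k) := strictMonoOn_of_lt_add_one Set.ordConnected_Icc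
    fun j _ hj hj1 => hσmono j hj.1 hj1.2
  have hshifts := sum_ite_eq_sum_comp (fun t => log M + log (1 / α t))
    (coe_Icc 1 k ▸ hσ.injOn) hσIcc (fun t ht => hshift t (mem_Icc.mp ht).1 (mem_Icc.mp ht).2)
  have hregret := hv.regret_le hη hα (m := fun t => ℓ (xl t) (y t))
    (fun t ht hpos hsum =>
      hxl t ht ▸ hexp (y t) M hM _ (fun i => hxe i t) _ (fun i => (hpos i).le) hsum) iseq hT
  rw [sum_add_distrib, Fintype.card_fin, hshifts, sum_add_distrib, sum_const, Nat.card_Icc,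
    Nat.add_sub_cancel, nsmul_eq_mul] at hregret
  refine ⟨hregret.trans_eq (by ring), fun hαinv => ⟨?_, ?_⟩⟩
  · have hσlog : ∑ j ∈ Icc 1 k, log (1 / α (σ j)) = ∑ j ∈ Icc 1 k, log (σ j : ℝ) :=
      sum_congr rfl fun j hj => by rw [hαinv _ (mem_Icc.mp (hσIcc j hj)).1, one_div_one_div]
    have hlogT : ∑ t ∈ Icc 2 T, log (1 / (1 - α t)) = log T := by
      rw [← sum_Icc_log_one_div_one_sub_inv hT]
      exact sum_congr rfl fun t ht => by rw [hαinv t (mem_Icc.mp ht).1]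
    rw [hσlog, hlogT] at hregret
    exact hregret.trans_eq (by ring)
  · have hσT := sum_log_le_card_mul_log fun j hj =>
      ⟨by have := mem_Icc.mp (hσIcc j hj); omega, (mem_Icc.mp (hσIcc j hj)).2⟩
    rw [Nat.card_Icc, Nat.add_sub_cancel] at hσT
    have := mul_le_mul_of_nonneg_left hσT (one_div_nonneg.mpr hη.le)
    have : ((k : ℝ) + 1) / η * log T = 1 / η * (k * log T) + 1 / η * log T := by ring
    linarith
end
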